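/- arXiv:2007.00547 — 2 statements merged into one kernel-verified Lean document; each statement's English description precedes it below -/
import Mathlib

section
/- For each harmonic homogeneous polynomial P of bidegree (p,q) on ℂ² with p ≥ 1, the function Z_1 P (restricted to S³) is the restriction of a harmonic homogeneous polynomial of bidegree (p−1, q+1); and if p = 0 then Z_1 P = 0 on S³. In other words, the operator Z_1 maps H_{p,q} into H_{p−1,q+1} for p ≥ 1 and annihilates H_{0,q}. -/
open MvPolynomial

/-- The CR vector field `Z₁ = w̄ ∂/∂z − z̄ ∂/∂w` acting formally on polynomials in
`z, w, z̄, w̄` (variables `0, 1, 2, 3`). -/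
noncomputable def Z1 (P : MvPolynomial (Fin 4) ℂ) : MvPolynomial (Fin 4) ℂ :=
  X 3 * pderiv 0 P - X 2 * pderiv 1 P

/-- Membership in the unit sphere `S³ ⊂ ℂ²`. -/
def OnSphere (v : ℂ × ℂ) : Prop :=
  Complex.normSq v.1 + Complex.normSq v.2 = 1

/-- Evaluation of a polynomial in `z, w, z̄, w̄` at a point of `ℂ²`. -/
noncomputable def evalS (P : MvPolynomial (Fin 4) ℂ) (v : ℂ × ℂ) : ℂ :=
  eval ![v.1, v.2, starRingEnd ℂ v.1, starRingEnd ℂ v.2] P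

/-- `P` is homogeneous of bidegree `(p,q)`: degree `p` in `(z,w)`, degree `q` in `(z̄,w̄)`. -/
def IsBihomogeneous (p q : ℕ) (P : MvPolynomial (Fin 4) ℂ) : Prop :=
  ∀ m ∈ P.support, m 0 + m 1 = p ∧ m 2 + m 3 = q

/-- (One quarter of) the Laplacian of `ℝ⁴ ≅ ℂ²`: `∂z∂z̄ + ∂w∂w̄`. -/
noncomputable def lap (P : MvPolynomial (Fin 4) ℂ) : MvPolynomial (Fin 4) ℂ :=
  pderiv 2 (pderiv 0 P) + pderiv 3 (pderiv 1 P)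

/-- `P` is a harmonic homogeneous polynomial of bidegree `(p,q)`, so that its restriction
to `S³` is an element of the spherical harmonic space `H_{p,q}`. -/
def IsHpq (p q : ℕ) (P : MvPolynomial (Fin 4) ℂ) : Prop :=
  IsBihomogeneous p q P ∧ lap P = 0


/-! `Z₁` differentiates once in `z` or `w` and multiplies by `w̄` or `z̄`, so it lowers the
holomorphic degree by one and raises the antiholomorphic degree by one; for `p = 0` the
polynomial involves neither `z` nor `w`, so `Z₁ P = 0` identically. `Z₁` commutes with
`∂z∂z̄ + ∂w∂w̄`: passing the Laplacian across the coefficients `w̄` and `z̄` produces the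
cross terms `∂w∂z P` and `∂z∂w P`, which cancel. -/

namespace MvPolynomial

variable {σ R : Type*} [CommSemiring R]

theorem pderiv_pderiv_comm (i j : σ) (φ : MvPolynomial σ R) :
    pderiv i (pderiv j φ) = pderiv j (pderiv i φ) := by
  classical
  obtain rfl | hij := eq_or_ne i j
  · rfl
  ext m
  simp only [coeff_pderiv, Finsupp.add_apply, Finsupp.single_eq_of_ne hij,
    Finsupp.single_eq_of_ne hij.symm, add_zero, add_right_comm m]
  ring

theorem IsWeightedHomogeneous.pderiv_eq_zero {w : σ → ℕ} {n : ℕ} {i : σ} {φ : MvPolynomial σ R}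
    (h : φ.IsWeightedHomogeneous w n) (hi : n < w i) : pderiv i φ = 0 := by
  ext m
  rw [coeff_pderiv, h.coeff_eq_zero, zero_mul, coeff_zero]
  rw [map_add, Finsupp.weight_single, one_smul]
  omega

end MvPolynomial

def holWeight : Fin 4 → ℕ := ![1, 1, 0, 0]

def antiholWeight : Fin 4 → ℕ := ![0, 0, 1, 1]

theorem weight_holWeight (m : Fin 4 →₀ ℕ) : Finsupp.weight holWeight m = m 0 + m 1 := by
  simp [Finsupp.weight_apply, Finsupp.sum_fintype, Fin.sum_univ_four, holWeight]

theorem weight_antiholWeight (m : Fin 4 →₀ ℕ) : Finsupp.weight antiholWeight m = m 2 + m 3 := by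
  simp [Finsupp.weight_apply, Finsupp.sum_fintype, Fin.sum_univ_four, antiholWeight]

theorem isBihomogeneous_iff {p q : ℕ} {P : MvPolynomial (Fin 4) ℂ} :
    IsBihomogeneous p q P ↔
      P.IsWeightedHomogeneous holWeight p ∧ P.IsWeightedHomogeneous antiholWeight q := by
  simp only [IsBihomogeneous, IsWeightedHomogeneous, weight_holWeight, weight_antiholWeight,
    mem_support_iff, ← forall_and]

theorem IsBihomogeneous.Z1 {p q : ℕ} {P : MvPolynomial (Fin 4) ℂ} (hP : IsBihomogeneous p q P)
    (hp : 1 ≤ p) : IsBihomogeneous (p - 1) (q + 1) (Z1 P) := by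
  obtain ⟨hol, antihol⟩ := isBihomogeneous_iff.mp hP
  have hol' (i j : Fin 4) (hi : holWeight i = 1) (hj : holWeight j = 0) :
      (X j * pderiv i P).IsWeightedHomogeneous holWeight (p - 1) := by
    simpa [hj] using (isWeightedHomogeneous_X ℂ _ j).mul (hol.pderiv (n' := p - 1) (by omega))
  have antihol' (i j : Fin 4) (hi : antiholWeight i = 0) (hj : antiholWeight j = 1) :
      (X j * pderiv i P).IsWeightedHomogeneous antiholWeight (q + 1) := by
    simpa [hj, add_comm] using
      (isWeightedHomogeneous_X ℂ _ j).mul (antihol.pderiv (n' := q) (by simp [hi]))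
  rw [isBihomogeneous_iff]
  exact ⟨(hol' 0 3 rfl rfl).sub (hol' 1 2 rfl rfl),
    (antihol' 0 3 rfl rfl).sub (antihol' 1 2 rfl rfl)⟩

theorem Z1_eq_zero_of_isBihomogeneous {q : ℕ} {P : MvPolynomial (Fin 4) ℂ}
    (hP : IsBihomogeneous 0 q P) : Z1 P = 0 := by
  have hol := (isBihomogeneous_iff.mp hP).1
  rw [Z1, hol.pderiv_eq_zero (i := 0) one_pos, hol.pderiv_eq_zero (i := 1) one_pos]
  simp

theorem lap_sub (P Q : MvPolynomial (Fin 4) ℂ) : lap (P - Q) = lap P - lap Q := by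
  simp only [lap, map_sub]
  ring

theorem pderiv_lap (i : Fin 4) (P : MvPolynomial (Fin 4) ℂ) :
    pderiv i (lap P) = lap (pderiv i P) := by
  simp only [lap, map_add, pderiv_pderiv_comm i]

theorem lap_X_two_mul (P : MvPolynomial (Fin 4) ℂ) :
    lap (X 2 * P) = X 2 * lap P + pderiv 0 P := by
  simp only [lap, pderiv_mul, pderiv_X_self, pderiv_X_of_ne (show (2 : Fin 4) ≠ 0 by decide),
    pderiv_X_of_ne (show (2 : Fin 4) ≠ 1 by decide),
    pderiv_X_of_ne (show (2 : Fin 4) ≠ 3 by decide), map_add, map_zero]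
  ring

theorem lap_X_three_mul (P : MvPolynomial (Fin 4) ℂ) :
    lap (X 3 * P) = X 3 * lap P + pderiv 1 P := by
  simp only [lap, pderiv_mul, pderiv_X_self, pderiv_X_of_ne (show (3 : Fin 4) ≠ 0 by decide),
    pderiv_X_of_ne (show (3 : Fin 4) ≠ 1 by decide),
    pderiv_X_of_ne (show (3 : Fin 4) ≠ 2 by decide), map_add, map_zero]
  ring

theorem lap_Z1 (P : MvPolynomial (Fin 4) ℂ) : lap (Z1 P) = Z1 (lap P) := by
  rw [Z1, Z1, lap_sub, lap_X_three_mul, lap_X_two_mul, pderiv_lap, pderiv_lap,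
    pderiv_pderiv_comm 0 1]
  ring

/-- `Z₁` maps `H_{p,q}` into `H_{p−1,q+1}` for `p ≥ 1`: if `P` is a
harmonic homogeneous polynomial of bidegree `(p,q)` with `p ≥ 1`, then `Z₁ P` is a
harmonic homogeneous polynomial of bidegree `(p−1, q+1)`; and if `p = 0` then
`Z₁ P = 0` on `S³`. -/
theorem stmt1 (p q : ℕ) (P : MvPolynomial (Fin 4) ℂ) (hP : IsHpq p q P) :
    (1 ≤ p → IsHpq (p - 1) (q + 1) (Z1 P)) ∧
    (p = 0 → ∀ v : ℂ × ℂ, OnSphere v → evalS (Z1 P) v = 0) := by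
  obtain ⟨hbihom, hharm⟩ := hP
  refine ⟨fun hp ↦ ⟨hbihom.Z1 hp, ?_⟩, ?_⟩
  · rw [lap_Z1, hharm]
    simp [Z1]
  · rintro rfl v -
    rw [Z1_eq_zero_of_isBihomogeneous hbihom, evalS, map_zero]
end

section
/- Let C > 0 and let C_s > 0 satisfy C_s² > C(5C_s + 1). Suppose (a_k)_{k≥0} is a sequence of nonnegative reals with a_0 ≤ C·ε, a_1 ≤ 5C·ε·a_0, and a_k ≤ C(5ε·a_{k−1} + ε²·a_{k−2}) for k ≥ 2, where ε > 0. Then a_k ≤ (C_s ε)^{k+1} for all k ≥ 0; consequently the power series Σ a_k t^k converges for |t| < (C_s ε)^{−1}. -/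
/-!
If `p r + q ≤ r²`, the majorant `c rᵏ` satisfies the two-step recursion with room to spare,
so a two-step induction propagates `a k ≤ c rᵏ` from the two initial terms. For the recursion
at hand `r = C_s ε`, and `p r + q ≤ r²` is `ε²` times `C(5C_s + 1) ≤ C_s²`. The geometric bound
then makes `∑ a_k t^k` converge by comparison as soon as `r |t| < 1`.
-/

theorem le_mul_pow_of_le_two_step {a : ℕ → ℝ} {p q r c : ℝ} (hp : 0 ≤ p) (hq : 0 ≤ q)
    (hr : 0 ≤ r) (hc : 0 ≤ c) (hpqr : p * r + q ≤ r ^ 2) (h0 : a 0 ≤ c) (h1 : a 1 ≤ c * r)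
    (hstep : ∀ k, a (k + 2) ≤ p * a (k + 1) + q * a k) (k : ℕ) :
    a k ≤ c * r ^ k := by
  suffices h : ∀ k, a k ≤ c * r ^ k ∧ a (k + 1) ≤ c * r ^ (k + 1) from (h k).1
  intro k
  induction k with
  | zero => exact ⟨by simpa using h0, by simpa using h1⟩
  | succ k ih =>
    refine ⟨ih.2, ?_⟩
    calc a (k + 2) ≤ p * a (k + 1) + q * a k := hstep k
      _ ≤ p * (c * r ^ (k + 1)) + q * (c * r ^ k) := by gcongr; exacts [ih.2, ih.1]
      _ = c * r ^ k * (p * r + q) := by ring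
      _ ≤ c * r ^ k * r ^ 2 := by gcongr
      _ = c * r ^ (k + 2) := by ring

theorem summable_mul_pow_of_abs_le_mul_pow {a : ℕ → ℝ} {c r t : ℝ} (hr : 0 ≤ r)
    (ha : ∀ k, |a k| ≤ c * r ^ k) (ht : r * |t| < 1) :
    Summable fun k => a k * t ^ k := by
  refine Summable.of_norm_bounded
    ((summable_geometric_of_lt_one (by positivity) ht).mul_left c) fun k => ?_
  calc ‖a k * t ^ k‖ = |a k| * |t| ^ k := by rw [norm_mul, norm_pow, Real.norm_eq_abs,
        Real.norm_eq_abs]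
    _ ≤ c * r ^ k * |t| ^ k := by gcongr; exact ha k
    _ = c * (r * |t|) ^ k := by ring

/-- the recursion underlying the convergence of the formal solution of the
tangency equation. If `C_s² > C(5C_s + 1)` and the nonnegative sequence `(a_k)` satisfies
`a₀ ≤ Cε`, `a₁ ≤ 5Cε a₀` and `a_k ≤ C(5ε a_{k−1} + ε² a_{k−2})` for `k ≥ 2`, then
`a_k ≤ (C_s ε)^{k+1}` for all `k`, and `∑ a_k t^k` converges for `|t| < (C_s ε)⁻¹`. -/
theorem stmt9 (C Cs ε : ℝ) (hC : 0 < C) (hCs : 0 < Cs) (hε : 0 < ε)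
    (hrel : C * (5 * Cs + 1) < Cs ^ 2)
    (a : ℕ → ℝ) (ha : ∀ k, 0 ≤ a k)
    (h0 : a 0 ≤ C * ε) (h1 : a 1 ≤ 5 * C * ε * a 0)
    (hk : ∀ k, 2 ≤ k → a k ≤ C * (5 * ε * a (k - 1) + ε ^ 2 * a (k - 2))) :
    (∀ k, a k ≤ (Cs * ε) ^ (k + 1)) ∧
    (∀ t : ℝ, |t| < (Cs * ε)⁻¹ → Summable fun k => a k * t ^ k) := by
  have h5C : 5 * C ≤ Cs := by nlinarith
  have hr : 0 < Cs * ε := by positivity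
  have hpqr : 5 * C * ε * (Cs * ε) + C * ε ^ 2 ≤ (Cs * ε) ^ 2 := by
    calc 5 * C * ε * (Cs * ε) + C * ε ^ 2 = ε ^ 2 * (C * (5 * Cs + 1)) := by ring
      _ ≤ ε ^ 2 * Cs ^ 2 := by gcongr
      _ = (Cs * ε) ^ 2 := by ring
  have h0' : a 0 ≤ Cs * ε := h0.trans (by gcongr; linarith)
  have h1' : a 1 ≤ Cs * ε * (Cs * ε) :=
    calc a 1 ≤ 5 * C * ε * a 0 := h1
      _ ≤ Cs * ε * (Cs * ε) := by gcongr; exact ha 0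
  have hstep (k : ℕ) : a (k + 2) ≤ 5 * C * ε * a (k + 1) + C * ε ^ 2 * a k := by
    have := hk (k + 2) (by omega)
    simp only [Nat.add_sub_cancel, show k + 2 - 1 = k + 1 from rfl] at this
    linarith
  have bound (k : ℕ) : a k ≤ Cs * ε * (Cs * ε) ^ k :=
    le_mul_pow_of_le_two_step (by positivity) (by positivity) hr.le hr.le hpqr h0' h1' hstep k
  refine ⟨fun k => by rw [pow_succ']; exact bound k, fun t ht => ?_⟩
  refine summable_mul_pow_of_abs_le_mul_pow hr.le (fun k => (abs_of_nonneg (ha k)).trans_le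
    (bound k)) ?_
  rwa [← lt_inv_mul_iff₀ hr, mul_one]
end
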